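/- arXiv:0908.3762 — 6 statements merged into one kernel-verified Lean document; each statement's English description precedes it below -/
import Mathlib

section
/- Let f : B → A be a surjective group homomorphism whose kernel is contained in the center of B, let B' be a perfect group (i.e. B' equals its own commutator subgroup), and let b₀, b₁ : B' → B be group homomorphisms with f ∘ b₀ = f ∘ b₁. Then b₀ = b₁. -/
open scoped commutatorElement

section CenterCommutator

variable {G : Type*} [Group G] {z : G}

theorem commutatorElement_mul_left_of_mem_center (hz : z ∈ Subgroup.center G) (a b : G) :
    ⁅z * a, b⁆ = ⁅a, b⁆ := by
  have hz' := Subgroup.mem_center_iff.mp ((Subgroup.center G).inv_mem hz)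
  calc ⁅z * a, b⁆ = z * (a * b * a⁻¹ * z⁻¹) * b⁻¹ := by group
    _ = ⁅a, b⁆ := by rw [hz', commutatorElement_def]; group

theorem commutatorElement_mul_right_of_mem_center (hz : z ∈ Subgroup.center G) (a b : G) :
    ⁅a, z * b⁆ = ⁅a, b⁆ := by
  rw [← commutatorElement_inv, commutatorElement_mul_left_of_mem_center hz, commutatorElement_inv]

end CenterCommutator

namespace MonoidHom

variable {G H : Type*} [Group G] [Group H] {f g : G →* H}

theorem commutator_le_eqLocus_of_mul_inv_mem_center
    (hfg : ∀ x, f x * (g x)⁻¹ ∈ Subgroup.center H) : commutator G ≤ f.eqLocus g := by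
  rw [commutator_def, Subgroup.commutator_le]
  intro x _ y _
  have hsplit : ∀ x, f x = (f x * (g x)⁻¹) * g x := fun x => by group
  change f _ = g _
  rw [map_commutatorElement, map_commutatorElement, hsplit x, hsplit y,
    commutatorElement_mul_left_of_mem_center (hfg x),
    commutatorElement_mul_right_of_mem_center (hfg y)]

theorem eq_of_mul_inv_mem_center_of_commutator_eq_top (hG : commutator G = ⊤)
    (hfg : ∀ x, f x * (g x)⁻¹ ∈ Subgroup.center H) : f = g :=
  eq_of_eqOn_top fun x _ =>
    commutator_le_eqLocus_of_mul_inv_mem_center hfg (hG ▸ Subgroup.mem_top x)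

end MonoidHom

theorem stmt_0_general {A B B' : Type*} [Group A] [Group B] [Group B']
    (f : B →* A)
    (hker : f.ker ≤ Subgroup.center B)
    (hperf : commutator B' = ⊤)
    (b₀ b₁ : B' →* B) (h : f.comp b₀ = f.comp b₁) : b₀ = b₁ :=
  MonoidHom.eq_of_mul_inv_mem_center_of_commutator_eq_top hperf fun x =>
    hker <| by
      rw [MonoidHom.mem_ker, map_mul, map_inv, ← f.comp_apply, h, f.comp_apply, mul_inv_cancel]

theorem stmt_0 {A B B' : Type*} [Group A] [Group B] [Group B']
    (f : B →* A) (hf : Function.Surjective f)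
    (hker : f.ker ≤ Subgroup.center B)
    (hperf : commutator B' = ⊤)
    (b₀ b₁ : B' →* B) (h : f.comp b₀ = f.comp b₁) : b₀ = b₁ :=
  stmt_0_general f hker hperf b₀ b₁ h
end

section
/- If f : B → A and g : C → B are surjective group homomorphisms with ker f ⊆ Z(B) and ker g ⊆ Z(C), and C is a perfect group, then the composite f ∘ g : C → A has ker(f ∘ g) ⊆ Z(C); that is, the composite of two central extensions of groups with perfect total group is again a central extension. -/
/-!
If `x` lies in the kernel of `f ∘ g`, then `g x` is central, so every commutator `⁅x, c⁆` lies in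
`ker g` and hence in `Z(C)`: `x` lies in the second centre `Z₂(C)`. For such `x` the map
`c ↦ ⁅x, c⁆` is a homomorphism into the abelian group `Z(C)`; it therefore kills `[C, C] = C`,
so `x` is central.
-/

open scoped commutatorElement IsMulCommutative

namespace Subgroup

variable {G : Type*} [Group G]

def commutatorElementCenterHom {x : G} (hx : x ∈ upperCentralSeries G 2) : G →* center G where
  toFun c := ⟨⁅x, c⁆, by simpa using mem_upperCentralSeries_succ_iff.mp hx c⟩
  map_one' := by ext; simp
  map_mul' a b := by
    have hb : ⁅x, b⁆ ∈ center G := by simpa using mem_upperCentralSeries_succ_iff.mp hx b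
    ext
    simp only [coe_mul, commutatorElement_mul_right_eq_mul_conj, mem_center_iff.mp hb a,
      mul_assoc, mul_inv_cancel, mul_one]

theorem upperCentralSeries_two_eq_center_of_commutator_eq_top (hG : _root_.commutator G = ⊤) :
    upperCentralSeries G 2 = center G := by
  refine le_antisymm (fun x hx => mem_center_iff.mpr fun c => ?_) ?_
  · have hc : c ∈ (commutatorElementCenterHom hx).ker :=
      Abelianization.commutator_subset_ker _ (hG.ge (mem_top c))
    exact (commutatorElement_eq_one_iff_commute.mp (congrArg Subtype.val hc)).symm
  · rw [← upperCentralSeries_one]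
    exact upperCentralSeries_mono G one_le_two

end Subgroup

theorem MonoidHom.mem_upperCentralSeries_two_of_map_mem_center {G H : Type*} [Group G] [Group H]
    {g : G →* H} (hg : g.ker ≤ Subgroup.center G) {x : G} (hx : g x ∈ Subgroup.center H) :
    x ∈ Subgroup.upperCentralSeries G 2 := by
  refine Subgroup.mem_upperCentralSeries_succ_iff.mpr fun c => ?_
  rw [Subgroup.upperCentralSeries_one]
  refine hg ?_
  rw [mem_ker, map_commutatorElement, commutatorElement_eq_one_iff_commute]
  exact (Subgroup.mem_center_iff.mp hx (g c)).symm

theorem stmt_1_general {A B C : Type*} [Group A] [Group B] [Group C]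
    (f : B →* A) (g : C →* B)
    (hfk : f.ker ≤ Subgroup.center B) (hgk : g.ker ≤ Subgroup.center C)
    (hC : commutator C = ⊤) :
    (f.comp g).ker ≤ Subgroup.center C := by
  intro x hx
  rw [← Subgroup.upperCentralSeries_two_eq_center_of_commutator_eq_top hC]
  exact g.mem_upperCentralSeries_two_of_map_mem_center hgk (hfk hx)

theorem stmt_1 {A B C : Type*} [Group A] [Group B] [Group C]
    (f : B →* A) (g : C →* B)
    (hf : Function.Surjective f) (hg : Function.Surjective g)
    (hfk : f.ker ≤ Subgroup.center B) (hgk : g.ker ≤ Subgroup.center C)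
    (hC : commutator C = ⊤) :
    (f.comp g).ker ≤ Subgroup.center C :=
  stmt_1_general f g hfk hgk hC
end

section
/- Let u : U → A be a universal central extension of groups, meaning u is surjective with ker u ⊆ Z(U), and for every surjective homomorphism f : B → A with ker f ⊆ Z(B) there is a unique homomorphism h : U → B with f ∘ h = u. Then U is a perfect group (and hence so is A). -/
/-!
Let `M` be the abelianization of `U`. Then `U × M → A`, `(x, m) ↦ u x`, is again a central
extension of `A`, and both `x ↦ (x, 1)` and `x ↦ (x, [x])` are morphisms from `u` to it.
By uniqueness they agree, so `U → M` is trivial, i.e. `U` is perfect; `A` is perfect as a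
quotient of `U`.
-/

universe u

open Subgroup

section

variable {U A : Type*} [Group U] [Group A]

theorem MonoidHom.ker_comp_fst_le_center {f : U →* A} (hf : f.ker ≤ center U)
    (M : Type*) [CommGroup M] : (f.comp (MonoidHom.fst U M)).ker ≤ center (U × M) := by
  rw [Subgroup.center_prod, CommGroup.center_eq_top]
  exact fun _ hx => ⟨hf hx, trivial⟩

theorem MonoidHom.eq_one_of_lift_unique {M : Type*} [CommGroup M] (f : U →* A)
    (hunique : ∀ h₁ h₂ : U →* U × M, (f.comp (MonoidHom.fst U M)).comp h₁ = f →
      (f.comp (MonoidHom.fst U M)).comp h₂ = f → h₁ = h₂)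
    (φ : U →* M) : φ = 1 := by
  have h : (MonoidHom.id U).prod φ = (MonoidHom.id U).prod 1 := hunique _ _ rfl rfl
  rw [← MonoidHom.snd_comp_prod (MonoidHom.id U) φ, h, MonoidHom.snd_comp_prod]

end

theorem Group.isPerfect_of_abelianization_of_eq_one {G : Type*} [Group G]
    (h : (Abelianization.of : G →* Abelianization G) = 1) : Group.IsPerfect G := by
  rw [Group.isPerfect_def, ← Abelianization.ker_of, h, MonoidHom.ker_one]

theorem stmt_4 {A U : Type u} [Group A] [Group U]
    (u : U →* A) (hu : Function.Surjective u)
    (huc : u.ker ≤ Subgroup.center U)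
    (huniv : ∀ (B : Type u) [Group B] (f : B →* A),
      Function.Surjective f → f.ker ≤ Subgroup.center B →
      ∃! h : U →* B, f.comp h = u) :
    commutator U = ⊤ ∧ commutator A = ⊤ := by
  have hU : Group.IsPerfect U :=
    Group.isPerfect_of_abelianization_of_eq_one <| u.eq_one_of_lift_unique
      (fun _ _ => (huniv _ (u.comp (MonoidHom.fst U (Abelianization U)))
        (hu.comp Prod.fst_surjective) (u.ker_comp_fst_le_center huc _)).unique) _
  exact ⟨hU.commutator_eq_top, (Group.IsPerfect.ofSurjective hu).commutator_eq_top⟩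
end

section
/- Let u : U → A be a surjective group homomorphism with ker u ⊆ Z(U), where U is perfect and every central extension of U splits (every surjective g : V → U with ker g ⊆ Z(V) admits a homomorphic section). Then u is a universal central extension: for every central extension f : B → A there is a unique homomorphism h : U → B with f ∘ h = u. -/
/-!
Existence: the pullback `U ×_A B → U` of a central extension `f : B → A` along `u` is again a
central extension, so it has a section `s`, and the second projection composed with `s` lifts `u`.
Uniqueness: two lifts `h₁, h₂` differ by central elements, so `x ↦ h₁ x * (h₂ x)⁻¹` is a
homomorphism into the abelian group `Z(B)`; it is trivial because `U` is perfect.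
-/

universe u

-- makes `Subgroup.center B` a `CommGroup`, for `Abelianization.commutator_subset_ker`
open scoped IsMulCommutative

namespace MonoidHom

variable {U B : Type*} [Group U] [Group B]

theorem eq_of_mul_inv_mem_center (hperf : commutator U = ⊤) {h₁ h₂ : U →* B}
    (hcent : ∀ x, h₁ x * (h₂ x)⁻¹ ∈ Subgroup.center B) : h₁ = h₂ := by
  let χ : U →* Subgroup.center B :=
    { toFun x := ⟨h₁ x * (h₂ x)⁻¹, hcent x⟩
      map_one' := by ext; simp
      map_mul' a b := by
        ext
        have hb := Subgroup.mem_center_iff.mp (hcent b) (h₂ a)⁻¹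
        simp only [map_mul, mul_inv_rev, Subgroup.coe_mul, mul_assoc] at hb ⊢
        rw [hb] }
  have hχ : ∀ x, χ x = 1 := fun x =>
    Abelianization.commutator_subset_ker χ (hperf ▸ Subgroup.mem_top x)
  ext x
  exact mul_inv_eq_one.mp (congrArg Subtype.val (hχ x))

theorem eq_of_comp_eq_of_ker_le_center {A : Type*} [Group A] (hperf : commutator U = ⊤)
    {f : B →* A} (hfc : f.ker ≤ Subgroup.center B) {h₁ h₂ : U →* B}
    (h : f.comp h₁ = f.comp h₂) : h₁ = h₂ :=
  eq_of_mul_inv_mem_center hperf fun x =>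
    hfc <| by simpa [mul_inv_eq_one] using DFunLike.congr_fun h x

variable {A : Type*} [Group A] (u : U →* A) (f : B →* A)

def pullback : Subgroup (U × B) :=
  (u.comp (fst U B)).eqLocus (f.comp (snd U B))

theorem mem_pullback {p : U × B} : p ∈ pullback u f ↔ u p.1 = f p.2 :=
  Iff.rfl

def pullbackFst : pullback u f →* U :=
  (fst U B).comp (pullback u f).subtype

def pullbackSnd : pullback u f →* B :=
  (snd U B).comp (pullback u f).subtype

theorem comp_pullbackSnd : f.comp (pullbackSnd u f) = u.comp (pullbackFst u f) :=
  ext fun p => p.2.symm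

variable {f}

theorem pullbackFst_surjective (hf : Function.Surjective f) :
    Function.Surjective (pullbackFst u f) := fun x =>
  let ⟨b, hb⟩ := hf (u x)
  ⟨⟨(x, b), hb.symm⟩, rfl⟩

theorem ker_pullbackFst_le_center (hfc : f.ker ≤ Subgroup.center B) :
    (pullbackFst u f).ker ≤ Subgroup.center (pullback u f) := by
  rintro ⟨⟨x, b⟩, hxb⟩ (rfl : x = 1)
  have hb : b ∈ Subgroup.center B := hfc (by simpa using ((mem_pullback u f).mp hxb).symm)
  refine Subgroup.mem_center_iff.mpr fun w => Subtype.ext (Prod.ext ?_ ?_)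
  · simp
  · exact Subgroup.mem_center_iff.mp hb w.1.2

end MonoidHom

theorem stmt_6_general {A U : Type u} [Group A] [Group U]
    (u : U →* A)
    (hperf : commutator U = ⊤)
    (hsplit : ∀ (V : Type u) [Group V] (g : V →* U),
      Function.Surjective g → g.ker ≤ Subgroup.center V →
      ∃ s : U →* V, g.comp s = MonoidHom.id U) :
    ∀ (B : Type u) [Group B] (f : B →* A),
      Function.Surjective f → f.ker ≤ Subgroup.center B →
      ∃! h : U →* B, f.comp h = u := by
  intro B _ f hf hfc
  obtain ⟨s, hs⟩ := hsplit _ (MonoidHom.pullbackFst u f) (MonoidHom.pullbackFst_surjective u hf)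
    (MonoidHom.ker_pullbackFst_le_center u hfc)
  have hlift : f.comp ((MonoidHom.pullbackSnd u f).comp s) = u := by
    rw [← MonoidHom.comp_assoc, MonoidHom.comp_pullbackSnd, MonoidHom.comp_assoc, hs,
      MonoidHom.comp_id]
  exact ⟨_, hlift, fun h hh =>
    MonoidHom.eq_of_comp_eq_of_ker_le_center hperf hfc (hh.trans hlift.symm)⟩

theorem stmt_6 {A U : Type u} [Group A] [Group U]
    (u : U →* A) (hu : Function.Surjective u)
    (huc : u.ker ≤ Subgroup.center U)
    (hperf : commutator U = ⊤)
    (hsplit : ∀ (V : Type u) [Group V] (g : V →* U),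
      Function.Surjective g → g.ker ≤ Subgroup.center V →
      ∃ s : U →* V, g.comp s = MonoidHom.id U) :
    ∀ (B : Type u) [Group B] (f : B →* A),
      Function.Surjective f → f.ker ≤ Subgroup.center B →
      ∃! h : U →* B, f.comp h = u :=
  stmt_6_general u hperf hsplit
end

section
/- Let f : B → A and g : C → B be central extensions of groups (surjective with central kernels). Then f ∘ g is a universal central extension of A if and only if g is a universal central extension of B. -/
universe u

/-- `u : U →* X` is a universal central extension: it is surjective with central kernel,
and factors uniquely through every central extension of `X`. -/
def IsUniversalCentralExtension {X U : Type u} [Group X] [Group U] (u : U →* X) : Prop :=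
  Function.Surjective u ∧ u.ker ≤ Subgroup.center U ∧
    ∀ (B : Type u) [Group B] (f : B →* X),
      Function.Surjective f → f.ker ≤ Subgroup.center B →
      ∃! h : U →* B, f.comp h = u

/-!
The domain of a universal central extension is perfect, and two maps from a perfect group into a
central extension that agree after projection are equal, because commutators only depend on their
entries modulo the central kernel. So in both directions only the existence of lifts matters, and
lifts are produced by pulling central extensions back along `f` or `g`.

If `g` is universal, `f ∘ g` is central by the three subgroups lemma, and a lift of `g` to the
pullback along `f` gives a lift of `f ∘ g`. If `f ∘ g` is universal, every central extension
`p : P → C` splits: the commutator subgroup of `P` is perfect and covers `C`, so it is a central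
extension of `A` through `f ∘ g ∘ p`, and universality provides the section.
-/

open scoped commutatorElement
open Subgroup Group MonoidHom

section Commutators

variable {G X : Type*} [Group G] [Group X]

theorem commutatorElement_mul_mem_center {a b z w : G} (hz : z ∈ center G)
    (hw : w ∈ center G) : ⁅a * z, b * w⁆ = ⁅a, b⁆ := by
  rw [mem_center_iff] at hz hw
  calc ⁅a * z, b * w⁆ = a * z * b * (w * (z⁻¹ * a⁻¹) * w⁻¹) * b⁻¹ := by group
    _ = a * (z * b * z⁻¹) * a⁻¹ * b⁻¹ := by rw [← hw]; group
    _ = ⁅a, b⁆ := by rw [← hz b]; group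

theorem commutatorElement_eq_of_ker_le_center {e : G →* X} (he : e.ker ≤ center G)
    {a a' b b' : G} (ha : e a = e a') (hb : e b = e b') : ⁅a, b⁆ = ⁅a', b'⁆ := by
  have hz : a⁻¹ * a' ∈ center G := he (by simp [mem_ker, ha])
  have hw : b⁻¹ * b' ∈ center G := he (by simp [mem_ker, hb])
  simpa using (commutatorElement_mul_mem_center (a := a) (b := b) hz hw).symm

theorem MonoidHom.eq_of_comp_eq_of_ker_le_center_s8 {C : Type*} [Group C] [IsPerfect C]
    {e : G →* X} (he : e.ker ≤ center G) {h₁ h₂ : C →* G}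
    (h : e.comp h₁ = e.comp h₂) : h₁ = h₂ := by
  suffices commutator C ≤ eqLocus h₁ h₂ by
    ext c
    exact this IsPerfect.mem_commutator
  refine commutator_le.mpr fun a _ b _ => ?_
  show h₁ ⁅a, b⁆ = h₂ ⁅a, b⁆
  rw [map_commutatorElement, map_commutatorElement]
  exact commutatorElement_eq_of_ker_le_center he (DFunLike.congr_fun h a)
    (DFunLike.congr_fun h b)

theorem Subgroup.le_center_of_commutator_le_center [IsPerfect G] {H : Subgroup G}
    (h : ⁅H, ⊤⁆ ≤ center G) : H ≤ center G := by
  have h' : ⁅⁅H, ⊤⁆, ⊤⁆ = ⊥ := commutator_top_right_eq_bot_iff_le_center.mpr h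
  -- three subgroups lemma
  have := commutator_commutator_eq_bot_of_rotate (H₁ := ⊤) (H₂ := ⊤)
    (by rw [commutator_comm ⊤ H]; exact h') h'
  rwa [← _root_.commutator_def, IsPerfect.commutator_eq_top,
    commutator_top_left_eq_bot_iff_le_center] at this

end Commutators

section Extensions

variable {B C D P U X : Type*} [Group B] [Group C] [Group D] [Group P] [Group U] [Group X]

theorem MonoidHom.ker_comp_le_center [IsPerfect C] {g : C →* B} {f : B →* X}
    (hgc : g.ker ≤ center C) (hfc : f.ker ≤ center B) : (f.comp g).ker ≤ center C := by
  refine le_center_of_commutator_le_center (le_trans (commutator_le.mpr fun x hx y _ => ?_) hgc)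
  have hgx : g x ∈ center B := hfc hx
  rw [mem_ker, map_commutatorElement, commutatorElement_eq_one_iff_commute]
  exact (mem_center_iff.mp hgx (g y)).symm

theorem MonoidHom.existsUnique_comp_eq [IsPerfect C] {e : D →* X} (hec : e.ker ≤ center D)
    {v : C →* X} (h : ∃ k : C →* D, e.comp k = v) : ∃! k : C →* D, e.comp k = v := by
  obtain ⟨k, hk⟩ := h
  exact ⟨k, hk, fun k' hk' => eq_of_comp_eq_of_ker_le_center_s8 hec (hk'.trans hk.symm)⟩

theorem MonoidHom.map_commutator_eq_top [IsPerfect U] {p : P →* U} (hp : Function.Surjective p) :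
    (commutator P).map p = ⊤ := by
  rw [map_commutator_eq, range_eq_top.mpr hp, ← _root_.commutator_def,
    IsPerfect.commutator_eq_top]

theorem MonoidHom.isPerfect_commutator [IsPerfect U] {p : P →* U} (hps : Function.Surjective p)
    (hpc : p.ker ≤ center P) : IsPerfect (commutator P) := by
  have hlift (a : P) : p a ∈ (commutator P).map p := by
    rw [map_commutator_eq_top hps]
    trivial
  refine isPerfect_iff.mpr (le_antisymm (commutator_le_self _) (commutator_le.mpr ?_))
  rintro a - b -
  obtain ⟨q, hq, hqa⟩ := hlift a
  obtain ⟨q', hq', hqb⟩ := hlift b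
  rw [commutatorElement_eq_of_ker_le_center hpc hqa.symm hqb.symm]
  exact commutator_mem_commutator hq hq'

theorem MonoidHom.ker_domRestrict_le_center {p : P →* U} (hpc : p.ker ≤ center P)
    (H : Subgroup P) : (p.domRestrict H).ker ≤ center H :=
  fun _ hq => mem_center_iff.mpr fun r => Subtype.ext (mem_center_iff.mp (hpc hq) r)

end Extensions

section Pullback

variable {B D X : Type*} [Group B] [Group D] [Group X]

def MonoidHom.pullback_s8 (g : B →* X) (e : D →* X) : Subgroup (B × D) :=
  (g.comp (fst B D)).eqLocus (e.comp (snd B D))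

variable (g : B →* X) {e : D →* X}

theorem MonoidHom.pullback_comm :
    e.comp ((snd B D).domRestrict (g.pullback_s8 e)) = g.comp ((fst B D).domRestrict (g.pullback_s8 e)) :=
  ext fun x => x.2.symm

theorem MonoidHom.pullback_fst_surjective (hes : Function.Surjective e) :
    Function.Surjective ((fst B D).domRestrict (g.pullback_s8 e)) := fun b =>
  let ⟨d, hd⟩ := hes (g b)
  ⟨⟨(b, d), hd.symm⟩, rfl⟩

theorem MonoidHom.ker_pullback_fst_le_center (hec : e.ker ≤ center D) :
    ((fst B D).domRestrict (g.pullback_s8 e)).ker ≤ center (g.pullback_s8 e) := by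
  rintro ⟨⟨b, d⟩, hbd⟩ hb
  obtain rfl : b = 1 := hb
  have hd : d ∈ center D := hec (by simpa using hbd.symm)
  refine mem_center_iff.mpr fun y => Subtype.ext (Prod.ext ?_ (mem_center_iff.mp hd y.1.2))
  simp

end Pullback

namespace IsUniversalCentralExtension

variable {A B C U X : Type u} [Group A] [Group B] [Group C] [Group U] [Group X]

theorem isPerfect {u : U →* X} (hu : IsUniversalCentralExtension u) : IsPerfect U := by
  let π : U × Abelianization U →* X := u.comp (fst _ _)
  have hπs : Function.Surjective π := fun x =>
    let ⟨v, hv⟩ := hu.1 x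
    ⟨(v, 1), hv⟩
  have hπc : π.ker ≤ center (U × Abelianization U) := by
    rintro ⟨v, a⟩ hv
    rw [Subgroup.center_prod]
    exact ⟨hu.2.1 hv, mem_center_iff.mpr fun b => mul_comm b a⟩
  -- two lifts of `u` to the central extension `U × Uᵃᵇ` of `X`
  have hof : (MonoidHom.id U).prod Abelianization.of = (MonoidHom.id U).prod 1 :=
    (hu.2.2 _ π hπs hπc).unique (by ext; rfl) (by ext; rfl)
  rw [isPerfect_def, ← Abelianization.ker_of, eq_top_iff]
  exact fun x _ => mem_ker.mpr (congrArg (fun φ : U →* U × Abelianization U => (φ x).2) hof)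

theorem exists_comp_eq_id {u : U →* X} (hu : IsUniversalCentralExtension u) {P : Type u}
    [Group P] {p : P →* U} (hps : Function.Surjective p) (hpc : p.ker ≤ center P) :
    ∃ s : U →* P, p.comp s = MonoidHom.id U := by
  have := hu.isPerfect
  -- the commutator subgroup of `P` is perfect and still covers `U`, so `u ∘ p'` is central
  have := isPerfect_commutator hps hpc
  let p' := p.domRestrict (commutator P)
  have hp's : Function.Surjective p' := by
    intro c
    obtain ⟨q, hq, rfl⟩ : c ∈ (commutator P).map p := by
      rw [map_commutator_eq_top hps]
      trivial
    exact ⟨⟨q, hq⟩, rfl⟩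
  obtain ⟨h, hh, -⟩ := hu.2.2 _ (u.comp p') (hu.1.comp hp's)
    (ker_comp_le_center (ker_domRestrict_le_center hpc _) hu.2.1)
  have hp'h : p'.comp h = MonoidHom.id U :=
    eq_of_comp_eq_of_ker_le_center_s8 hu.2.1 (by rw [← comp_assoc, hh, comp_id])
  exact ⟨(commutator P).subtype.comp h, hp'h⟩

theorem of_comp {f : B →* A} {g : C →* B} (hu : IsUniversalCentralExtension (f.comp g))
    (hg : Function.Surjective g) (hgc : g.ker ≤ center C) : IsUniversalCentralExtension g := by
  have := hu.isPerfect
  refine ⟨hg, hgc, fun D _ e hes hec => existsUnique_comp_eq hec ?_⟩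
  obtain ⟨s, hs⟩ := hu.exists_comp_eq_id (g.pullback_fst_surjective hes)
    (g.ker_pullback_fst_le_center hec)
  exact ⟨((snd C D).domRestrict _).comp s,
    by rw [← comp_assoc, pullback_comm, comp_assoc, hs, comp_id]⟩

theorem comp {f : B →* A} {g : C →* B} (hu : IsUniversalCentralExtension g)
    (hf : Function.Surjective f) (hfc : f.ker ≤ center B) :
    IsUniversalCentralExtension (f.comp g) := by
  have := hu.isPerfect
  refine ⟨hf.comp hu.1, ker_comp_le_center hu.2.1 hfc,
    fun D _ e hes hec => existsUnique_comp_eq hec ?_⟩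
  obtain ⟨k, hk, -⟩ := hu.2.2 _ _ (f.pullback_fst_surjective hes)
    (f.ker_pullback_fst_le_center hec)
  exact ⟨((snd B D).domRestrict _).comp k,
    by rw [← comp_assoc, pullback_comm, comp_assoc, hk]⟩

end IsUniversalCentralExtension

theorem stmt_8 {A B C : Type u} [Group A] [Group B] [Group C]
    (f : B →* A) (g : C →* B)
    (hf : Function.Surjective f) (hfc : f.ker ≤ Subgroup.center B)
    (hg : Function.Surjective g) (hgc : g.ker ≤ Subgroup.center C) :
    IsUniversalCentralExtension (f.comp g) ↔ IsUniversalCentralExtension g :=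
  ⟨fun hu => hu.of_comp hg hgc, fun hu => hu.comp hf hfc⟩
end

section
/- Let A be a perfect group, let f : F → A be a surjective homomorphism from a free group F, and let R = ker f. Then the induced map [F,F]/[R,F] → A (given by restriction of f to the commutator subgroup, which descends to the quotient) is surjective, its kernel is (R ∩ [F,F])/[R,F], and this kernel is contained in the center of [F,F]/[R,F]; i.e. it is a central extension of A. -/
/-!
Restricting `f` to `[F, F]` and passing to the quotient by `[R, F] ≤ R` gives a map whose kernel is
the image of `R ∩ [F, F]`. Since `A` is perfect, `f` maps `[F, F]` onto `[A, A] = A`. An element `r`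
of `R` commutes with every `y` modulo `[R, F]`, because `r⁻¹ y⁻¹ r y = ⁅r⁻¹, y⁻¹⁆ ∈ [R, F]`.
-/

universe u

open Subgroup
open scoped commutatorElement

section

variable {G A : Type*} [Group G] [Group A]

theorem map_commutator_eq_top_of_surjective {f : G →* A} (hf : Function.Surjective f)
    (hA : commutator A = ⊤) : (commutator G).map f = ⊤ := by
  rw [map_commutator_eq, MonoidHom.range_eq_top.mpr hf, ← commutator_def, hA]

/-- For `H = [G, G]` this is the map `[F, F]/[R, F] → A` with `R = ker f`. -/
def MonoidHom.quotientCommutatorKerLift (f : G →* A) (H : Subgroup G) :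
    H ⧸ ⁅f.ker, (⊤ : Subgroup G)⁆.subgroupOf H →* A :=
  QuotientGroup.lift _ (f.domRestrict H)
    ((f.ker_domRestrict H).symm ▸ subgroupOf_mono H (commutator_le_left f.ker ⊤))

theorem MonoidHom.quotientCommutatorKerLift_surjective {f : G →* A} {H : Subgroup G}
    (hH : H.map f = ⊤) : Function.Surjective (f.quotientCommutatorKerLift H) :=
  QuotientGroup.lift_surjective_of_surjective _ _
    (MonoidHom.range_eq_top.mp (by rw [MonoidHom.domRestrict_range, hH])) _

theorem MonoidHom.ker_quotientCommutatorKerLift (f : G →* A) (H : Subgroup G) :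
    (f.quotientCommutatorKerLift H).ker =
      (f.ker.subgroupOf H).map (QuotientGroup.mk' (⁅f.ker, (⊤ : Subgroup G)⁆.subgroupOf H)) := by
  rw [quotientCommutatorKerLift, QuotientGroup.ker_lift, MonoidHom.ker_domRestrict]

theorem map_subgroupOf_le_center_quotient_commutator_top (R H : Subgroup G) [R.Normal] :
    (R.subgroupOf H).map (QuotientGroup.mk' (⁅R, (⊤ : Subgroup G)⁆.subgroupOf H)) ≤
      center (H ⧸ ⁅R, (⊤ : Subgroup G)⁆.subgroupOf H) := by
  rintro _ ⟨x, hxR, rfl⟩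
  rw [mem_center_iff]
  intro z
  induction z using QuotientGroup.induction_on with
  | H y =>
    change QuotientGroup.mk (y * x) = QuotientGroup.mk (x * y)
    rw [QuotientGroup.eq, mem_subgroupOf]
    have hcomm : (((y * x)⁻¹ * (x * y) : H) : G) = ⁅(x : G)⁻¹, (y : G)⁻¹⁆ := by
      push_cast
      group
    rw [hcomm]
    exact commutator_mem_commutator (inv_mem (mem_subgroupOf.mp hxR)) (mem_top _)

end

theorem stmt_16 {A : Type u} [Group A] (hA : commutator A = ⊤)
    {α : Type u} (f : FreeGroup α →* A) (hf : Function.Surjective f) :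
    ∃ φ : commutator (FreeGroup α) ⧸
        ((⁅f.ker, (⊤ : Subgroup (FreeGroup α))⁆).subgroupOf (commutator (FreeGroup α))) →* A,
      (∀ x : commutator (FreeGroup α), φ (QuotientGroup.mk x) = f x) ∧
      Function.Surjective φ ∧
      φ.ker = Subgroup.map
        (QuotientGroup.mk'
          ((⁅f.ker, (⊤ : Subgroup (FreeGroup α))⁆).subgroupOf (commutator (FreeGroup α))))
        ((f.ker ⊓ commutator (FreeGroup α)).subgroupOf (commutator (FreeGroup α))) ∧
      φ.ker ≤ Subgroup.center
        (commutator (FreeGroup α) ⧸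
          ((⁅f.ker, (⊤ : Subgroup (FreeGroup α))⁆).subgroupOf (commutator (FreeGroup α)))) := by
  refine ⟨f.quotientCommutatorKerLift (commutator (FreeGroup α)), fun _ => rfl,
    MonoidHom.quotientCommutatorKerLift_surjective (map_commutator_eq_top_of_surjective hf hA),
    ?_, ?_⟩
  · rw [MonoidHom.ker_quotientCommutatorKerLift, inf_subgroupOf_right]
  · rw [MonoidHom.ker_quotientCommutatorKerLift]
    exact map_subgroupOf_le_center_quotient_commutator_top f.ker _
end
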